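/- arXiv:1810.04468 — 2 statements merged into one kernel-verified Lean document; each statement's English description precedes it below -/
import Mathlib

section
/- For every x ∈ [0,1), (1 - 2/(√((1+x)/(1-x)) + 1))^{1/√(2 ln(1/x))} ≤ e^{-1}, interpreting the expression by its limit e^{-1} as x → 1⁻ and the value at x = 0 appropriately. -/
/-!
With `t = √((1 - x) / (1 + x)) ∈ (0, 1)` the base is `(1 - t) / (1 + t) = exp (-2 artanh t)`
and `log (1 / x) = 2 artanh (t²)`, so the claim reduces to `artanh (t²) ≤ (artanh t)²`.
Both sides vanish at `t = 0`, and the derivative of the difference,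
`2 artanh t / (1 - t²) - 2t / (1 - t⁴)`, is nonnegative because `artanh t ≥ t`.
-/

open Real Set

namespace Real

theorem artanh_eq_half_log_sub {x : ℝ} (hx : x ∈ Ioo (-1) 1) :
    artanh x = (log (1 + x) - log (1 - x)) / 2 := by
  rw [artanh_eq_half_log (Ioo_subset_Icc_self hx),
    log_div (by linarith [hx.1]) (by linarith [hx.2])]
  ring

theorem hasDerivAt_artanh {x : ℝ} (hx : x ∈ Ioo (-1) 1) :
    HasDerivAt artanh (1 - x ^ 2)⁻¹ x := by
  have h₁ : 1 + x ≠ 0 := by linarith [hx.1]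
  have h₂ : 1 - x ≠ 0 := by linarith [hx.2]
  have hlog : HasDerivAt (fun y => (log (1 + y) - log (1 - y)) / 2)
      ((1 / (1 + x) - (-1) / (1 - x)) / 2) x := by
    have hplus := ((hasDerivAt_id x).const_add 1).log h₁
    have hminus := ((hasDerivAt_id x).const_sub 1).log h₂
    simp only [id] at hplus hminus
    exact (hplus.sub hminus).div_const 2
  refine (hlog.congr_of_eventuallyEq (Filter.eventually_of_mem (Ioo_mem_nhds hx.1 hx.2)
    fun y hy => artanh_eq_half_log_sub hy)).congr_deriv ?_
  rw [show 1 - x ^ 2 = (1 + x) * (1 - x) by ring]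
  field_simp
  ring

theorem le_artanh {x : ℝ} (h₀ : 0 ≤ x) (h₁ : x < 1) : x ≤ artanh x := by
  have hseries := hasSum_log_sub_log_of_abs_lt_one (abs_lt.2 ⟨by linarith, h₁⟩)
  have hfirst := le_hasSum hseries 0 fun k _ => by positivity
  rw [artanh_eq_half_log_sub ⟨by linarith, h₁⟩]
  norm_num at hfirst
  linarith

theorem artanh_sq_le_sq_artanh {x : ℝ} (h₀ : 0 ≤ x) (h₁ : x < 1) :
    artanh (x ^ 2) ≤ artanh x ^ 2 := by
  let f' : ℝ → ℝ := fun y => 2 * artanh y * (1 - y ^ 2)⁻¹ - 2 * y * (1 - (y ^ 2) ^ 2)⁻¹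
  have hderiv : ∀ y ∈ Ico (0 : ℝ) 1,
      HasDerivAt (fun y => artanh y ^ 2 - artanh (y ^ 2)) (f' y) y := by
    intro y ⟨hy₀, hy₁⟩
    have hy₂ : y ^ 2 ∈ Ioo (-1 : ℝ) 1 := ⟨by nlinarith, by nlinarith⟩
    refine (((hasDerivAt_artanh ⟨by linarith, hy₁⟩).pow 2).sub
      ((hasDerivAt_artanh hy₂).comp (h := fun y : ℝ => y ^ 2) y
        (hasDerivAt_pow 2 y))).congr_deriv ?_
    simp only [f']
    push_cast
    ring
  have hmono : MonotoneOn (fun y => artanh y ^ 2 - artanh (y ^ 2)) (Ico 0 1) := by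
    refine monotoneOn_of_hasDerivWithinAt_nonneg (convex_Ico 0 1)
      (fun y hy => (hderiv y hy).continuousAt.continuousWithinAt)
      (fun y hy => (hderiv y (interior_subset hy)).hasDerivWithinAt) ?_
    intro y hy
    rw [interior_Ico] at hy
    obtain ⟨hy₀, hy₁⟩ := hy
    have hsq : 0 < 1 - y ^ 2 := by nlinarith
    have hquart : 1 - y ^ 2 ≤ 1 - (y ^ 2) ^ 2 := by nlinarith
    have hle := le_artanh hy₀.le hy₁
    have hderiv_le : 2 * y * (1 - (y ^ 2) ^ 2)⁻¹ ≤ 2 * artanh y * (1 - y ^ 2)⁻¹ :=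
      calc 2 * y * (1 - (y ^ 2) ^ 2)⁻¹ ≤ 2 * y * (1 - y ^ 2)⁻¹ := by gcongr
        _ ≤ 2 * artanh y * (1 - y ^ 2)⁻¹ := by gcongr
    simp only [f']
    linarith
  simpa [artanh_zero] using hmono ⟨le_rfl, by norm_num⟩ ⟨h₀, h₁⟩ h₀

end Real

theorem rpow_one_div_le_exp_neg_one {b p : ℝ} (hb : 0 < b) (hp : 0 < p) (h : p ≤ -log b) :
    b ^ (1 / p) ≤ exp (-1) := by
  rw [rpow_def_of_pos hb, exp_le_exp, mul_one_div, div_le_iff₀ hp]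
  linarith

theorem one_sub_div_one_add_rpow_le_exp_neg_one {t : ℝ} (h₀ : 0 < t) (h₁ : t < 1) :
    ((1 - t) / (1 + t)) ^ (1 / √(4 * artanh (t ^ 2))) ≤ exp (-1) := by
  have hlog : -log ((1 - t) / (1 + t)) = 2 * artanh t := by
    rw [← log_inv, inv_div, artanh_eq_half_log ⟨by linarith, h₁.le⟩]
    ring
  have hpos : 0 < artanh (t ^ 2) := artanh_pos ⟨by positivity, by nlinarith⟩
  refine rpow_one_div_le_exp_neg_one (div_pos (by linarith) (by linarith))
    (sqrt_pos.2 (by positivity)) ?_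
  rw [hlog, sqrt_le_left (by linarith [le_artanh h₀.le h₁])]
  nlinarith [artanh_sq_le_sq_artanh h₀.le h₁]

theorem stmt_2 (x : ℝ) (hx : x ∈ Set.Ioo (0 : ℝ) 1) :
    (1 - 2 / (Real.sqrt ((1 + x) / (1 - x)) + 1))
        ^ (1 / Real.sqrt (2 * Real.log (1 / x))) ≤ Real.exp (-1) := by
  obtain ⟨hx₀, hx₁⟩ := hx
  set t := √((1 - x) / (1 + x))
  have ht₀ : 0 < t := sqrt_pos.2 (div_pos (by linarith) (by linarith))
  have ht₁ : t < 1 := (sqrt_lt' one_pos).2 (by rw [one_pow, div_lt_one (by linarith)]; linarith)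
  have hbase : 1 - 2 / (√((1 + x) / (1 - x)) + 1) = (1 - t) / (1 + t) := by
    rw [← inv_div (1 - x), sqrt_inv]
    field_simp
    ring
  have hlog : 2 * log (1 / x) = 4 * artanh (t ^ 2) := by
    have : 1 / x = (1 + t ^ 2) / (1 - t ^ 2) := by
      rw [sq_sqrt (by positivity)]
      field_simp [hx₀.ne']
      ring
    rw [this, artanh_eq_half_log ⟨by nlinarith, by nlinarith⟩]
    ring
  rw [hbase, hlog]
  exact one_sub_div_one_add_rpow_le_exp_neg_one ht₀ ht₁
end

section
/- Let Y₁,…,Y_D be independent σ²-subgaussian random variables with mean μ, let η > 1, 0 < ε < (η-1)/(7(η+1)), s > 1, N ≥ 1, and let w₁,…,w_D be real numbers with |wⱼ - 1/N| < ε/N for all j. Then P[ (∑ wⱼYⱼ)/(∑ wⱼ) ≥ μ + √(4ησ² ln s / (N ∑ wⱼ)) ] ≤ s^{-(η+1)}. -/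
/-!
The centred weighted sum `∑ wⱼ (Yⱼ - μ)` is `σ² ∑ wⱼ²`-subgaussian, so the Chernoff bound
controls the event by `exp (-(t W)² / (2 σ² ∑ wⱼ²))` with `W = ∑ wⱼ`. For the given `t` the
exponent is `2 η W log s / (N ∑ wⱼ²)`, and it is at least `(η + 1) log s` because every weight
satisfies `N wⱼ < 1 + ε ≤ 2η / (η + 1)`, whence `(η + 1) N ∑ wⱼ² ≤ 2 η ∑ wⱼ`.
-/

open MeasureTheory ProbabilityTheory

open Real
open scoped NNReal

lemma hasSubgaussianMGF_of_integral_exp_le {Ω : Type*} [MeasurableSpace Ω] {P : Measure Ω}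
    {X : Ω → ℝ} {σ : ℝ}
    (h : ∀ l : ℝ, Integrable (fun ω => exp (l * X ω)) P ∧
      ∫ ω, exp (l * X ω) ∂P ≤ exp (l ^ 2 * σ ^ 2 / 2)) :
    HasSubgaussianMGF X (σ ^ 2).toNNReal P where
  integrable_exp_mul l := (h l).1
  mgf_le l := (h l).2.trans_eq (by rw [Real.coe_toNNReal _ (sq_nonneg σ), mul_comm (σ ^ 2)])

lemma measureReal_weightedMean_ge_le {Ω ι : Type*} [MeasurableSpace Ω] {P : Measure Ω}
    [Fintype ι] {Y : ι → Ω → ℝ} (hindep : iIndepFun Y P) {μ : ℝ} {c : ℝ≥0}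
    (hY : ∀ i, HasSubgaussianMGF (fun ω => Y i ω - μ) c P)
    {w : ι → ℝ} (hw : 0 < ∑ i, w i) {t : ℝ} (ht : 0 ≤ t) :
    P.real {ω | μ + t ≤ (∑ i, w i * Y i ω) / ∑ i, w i} ≤
      exp (-(t * ∑ i, w i) ^ 2 / (2 * (c * ∑ i, w i ^ 2))) := by
  have hindep' : iIndepFun (fun i ω => w i * (Y i ω - μ)) P :=
    hindep.comp (fun i y => w i * (y - μ)) fun i => by fun_prop
  have hset : {ω | μ + t ≤ (∑ i, w i * Y i ω) / ∑ i, w i} =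
      {ω | t * ∑ i, w i ≤ ∑ i, w i * (Y i ω - μ)} := by
    ext ω
    simp only [Set.mem_ofPred_eq, le_div_iff₀ hw, mul_sub, Finset.sum_sub_distrib,
      ← Finset.sum_mul]
    constructor <;> intro h <;> linarith
  rw [hset]
  refine (HasSubgaussianMGF.measure_sum_ge_le_of_iIndepFun hindep' (s := Finset.univ)
    (fun i _ => (hY i).const_mul (w i)) (mul_nonneg ht hw.le)).trans_eq ?_
  rw [NNReal.coe_sum, Finset.mul_sum _ _ (c : ℝ)]
  congr 3
  exact Finset.sum_congr rfl fun i _ => mul_comm _ _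

lemma abs_natCast_mul_sub_one_lt {N : ℕ} (hN : 1 ≤ N) {x ε : ℝ}
    (h : |x - 1 / N| < ε / N) : |N * x - 1| < ε := by
  have hN' : (0 : ℝ) < N := by exact_mod_cast hN
  rwa [show (N : ℝ) * x - 1 = N * (x - 1 / N) by field_simp, abs_mul, abs_of_pos hN',
    ← lt_div_iff₀' hN']

lemma pos_and_add_one_mul_le_of_abs_sub_one_lt {η ε x : ℝ} (hη : 1 < η)
    (hε : ε ≤ (η - 1) / (η + 1)) (hx : |x - 1| < ε) : 0 < x ∧ (η + 1) * x ≤ 2 * η := by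
  have hη1 : 0 < η + 1 := by linarith
  rw [le_div_iff₀ hη1] at hε
  obtain ⟨hlo, hhi⟩ := abs_lt.mp hx
  constructor <;> nlinarith

lemma mul_sum_sq_le_mul_sum {ι : Type*} (s : Finset ι) {w : ι → ℝ} {a b : ℝ}
    (hw : ∀ i ∈ s, 0 ≤ w i ∧ a * w i ≤ b) : a * ∑ i ∈ s, w i ^ 2 ≤ b * ∑ i ∈ s, w i := by
  rw [Finset.mul_sum, Finset.mul_sum]
  refine Finset.sum_le_sum fun i hi => ?_
  calc a * w i ^ 2 = w i * (a * w i) := by ring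
    _ ≤ w i * b := mul_le_mul_of_nonneg_left (hw i hi).2 (hw i hi).1
    _ = b * w i := mul_comm _ _

lemma exp_neg_sq_div_le_rpow {σ η s N W S : ℝ} (hσ : 0 < σ) (hη : 0 ≤ η) (hs : 1 < s)
    (hN : 0 < N) (hW : 0 < W) (hS : 0 < S) (hNS : (η + 1) * N * S ≤ 2 * η * W) :
    exp (-(√(4 * η * σ ^ 2 * log s / (N * W)) * W) ^ 2 / (2 * (σ ^ 2 * S))) ≤
      s ^ (-(η + 1)) := by
  have hlog : 0 < log s := log_pos hs
  rw [mul_pow, sq_sqrt (by positivity), rpow_def_of_pos (by linarith), exp_le_exp,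
    div_le_iff₀ (by positivity)]
  field_simp
  nlinarith [mul_le_mul_of_nonneg_left hNS (by positivity : 0 ≤ σ ^ 2 * log s)]

theorem stmt_10_general {Ω : Type*} [MeasurableSpace Ω] (P : Measure Ω) [IsProbabilityMeasure P]
    (D : ℕ) (hD : 1 ≤ D) (Y : Fin D → Ω → ℝ)
    (hindep : iIndepFun Y P)
    (σ μ : ℝ) (hσ : 0 < σ)
    (hsub : ∀ j, ∀ l : ℝ, Integrable (fun ω => Real.exp (l * (Y j ω - μ))) P ∧
      (∫ ω, Real.exp (l * (Y j ω - μ)) ∂P) ≤ Real.exp (l ^ 2 * σ ^ 2 / 2))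
    (η ε s : ℝ) (hη : 1 < η) (hε : ε < (η - 1) / (7 * (η + 1))) (hs : 1 < s)
    (N : ℕ) (hN : 1 ≤ N)
    (w : Fin D → ℝ) (hw : ∀ j, |w j - 1 / N| < ε / N) :
    P {ω | μ + Real.sqrt (4 * η * σ ^ 2 * Real.log s / (N * ∑ j, w j))
            ≤ (∑ j, w j * Y j ω) / (∑ j, w j)} ≤
      ENNReal.ofReal (s ^ (-(η + 1))) := by
  have hN' : (0 : ℝ) < N := by exact_mod_cast hN
  have hε' : ε ≤ (η - 1) / (η + 1) :=
    hε.le.trans (div_le_div_of_nonneg_left (by linarith) (by linarith) (by linarith))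
  have hweight : ∀ j, 0 < w j ∧ (η + 1) * N * w j ≤ 2 * η := fun j => by
    obtain ⟨hpos, hle⟩ :=
      pos_and_add_one_mul_le_of_abs_sub_one_lt hη hε' (abs_natCast_mul_sub_one_lt hN (hw j))
    exact ⟨pos_of_mul_pos_right hpos hN'.le, by rwa [mul_assoc]⟩
  have hne : (Finset.univ : Finset (Fin D)).Nonempty := Finset.univ_nonempty_iff.2 ⟨⟨0, hD⟩⟩
  have hW := Finset.sum_pos (fun j _ => (hweight j).1) hne
  have hS := Finset.sum_pos (fun j _ => pow_pos (hweight j).1 2) hne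
  have hChernoff := measureReal_weightedMean_ge_le hindep
    (fun j => hasSubgaussianMGF_of_integral_exp_le (hsub j)) hW
    (sqrt_nonneg (4 * η * σ ^ 2 * log s / (N * ∑ j, w j)))
  rw [Real.coe_toNNReal _ (sq_nonneg σ)] at hChernoff
  rw [← ofReal_measureReal]
  exact ENNReal.ofReal_le_ofReal (hChernoff.trans (exp_neg_sq_div_le_rpow hσ (by linarith) hs
    hN' hW hS (mul_sum_sq_le_mul_sum _ fun j _ => ⟨(hweight j).1.le, (hweight j).2⟩)))

theorem stmt_10 {Ω : Type*} [MeasurableSpace Ω] (P : Measure Ω) [IsProbabilityMeasure P]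
    (D : ℕ) (hD : 1 ≤ D) (Y : Fin D → Ω → ℝ) (hmeas : ∀ j, Measurable (Y j))
    (hindep : iIndepFun Y P)
    (σ μ : ℝ) (hσ : 0 < σ)
    (hsub : ∀ j, ∀ l : ℝ, Integrable (fun ω => Real.exp (l * (Y j ω - μ))) P ∧
      (∫ ω, Real.exp (l * (Y j ω - μ)) ∂P) ≤ Real.exp (l ^ 2 * σ ^ 2 / 2))
    (η ε s : ℝ) (hη : 1 < η) (hε0 : 0 < ε) (hε : ε < (η - 1) / (7 * (η + 1))) (hs : 1 < s)
    (N : ℕ) (hN : 1 ≤ N)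
    (w : Fin D → ℝ) (hw : ∀ j, |w j - 1 / N| < ε / N) :
    P {ω | μ + Real.sqrt (4 * η * σ ^ 2 * Real.log s / (N * ∑ j, w j))
            ≤ (∑ j, w j * Y j ω) / (∑ j, w j)} ≤
      ENNReal.ofReal (s ^ (-(η + 1))) :=
  stmt_10_general P D hD Y hindep σ μ hσ hsub η ε s hη hε hs N hN w hw
end
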